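/- arXiv:0704.2609 — 6 statements merged into one kernel-verified Lean document; each statement's English description precedes it below -/
import Mathlib

section
/- The first nontrivial A∞ relation in dimension one: with the trilinear operation m defined by m(·,·,·)(i,j) = ⅛(h(j)−h(i))·α(i,j)·β(i,j) for any triple consisting of one 0-form h and two 1-forms α, β (in any order of arguments), one has for all f, g : V → ℝ, ψ : V × V → ℝ and all i, j ∈ V: ((f ∧ g) ∧ ψ)(i,j) − (f ∧ (g ∧ ψ))(i,j) = m(df, g, ψ)(i,j) + m(f, dg, ψ)(i,j), where m(df, g, ψ)(i,j) = ⅛(g(j)−g(i))(f(j)−f(i))ψ(i,j) and m(f, dg, ψ)(i,j) = ⅛(f(j)−f(i))(g(j)−g(i))ψ(i,j). -/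
/-- Discrete differential of a 0-form: `(df)(i,j) = f(j) − f(i)`. -/
noncomputable def d0 {V : Type*} (f : V → ℝ) : V → V → ℝ := fun i j => f j - f i

/-- Wedge product of two 0-forms: `(f ∧ g)(i) = f(i)·g(i)`. -/
noncomputable def w00 {V : Type*} (f g : V → ℝ) : V → ℝ := fun i => f i * g i

/-- Wedge product of a 0-form with a 1-form:
`(f ∧ ψ)(i,j) = (ψ ∧ f)(i,j) = ½(f(i)+f(j))·ψ(i,j)`. -/
noncomputable def w01 {V : Type*} (f : V → ℝ) (ψ : V → V → ℝ) : V → V → ℝ :=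
  fun i j => (1 / 2) * (f i + f j) * ψ i j

/-- The higher operation `m = m⁽³⁾` on a triple consisting of a 0-form `h` and
two 1-forms `α, β`: `m(h,α,β)(i,j) = ⅛(h(j)−h(i))·α(i,j)·β(i,j)`. -/
noncomputable def m3 {V : Type*} (h : V → ℝ) (α β : V → V → ℝ) : V → V → ℝ :=
  fun i j => (1 / 8) * (h j - h i) * α i j * β i j

-- The associator of the averaging wedge; each of the two `m3` terms is half of it.
theorem w01_w00_sub_w01_w01 {V : Type*} (f g : V → ℝ) (ψ : V → V → ℝ) (i j : V) :
    w01 (w00 f g) ψ i j - w01 f (w01 g ψ) i j = (1 / 4) * d0 f i j * d0 g i j * ψ i j := by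
  simp only [w01, w00, d0]
  ring

theorem m3_d0_apply {V : Type*} (h f : V → ℝ) (ψ : V → V → ℝ) (i j : V) :
    m3 h (d0 f) ψ i j = (1 / 8) * d0 h i j * d0 f i j * ψ i j :=
  rfl

/-- The first nontrivial A∞ relation in dimension one:
`((f ∧ g) ∧ ψ)(i,j) − (f ∧ (g ∧ ψ))(i,j) = m(df, g, ψ)(i,j) + m(f, dg, ψ)(i,j)`,
where `m(df, g, ψ)(i,j) = ⅛(g(j)−g(i))(f(j)−f(i))ψ(i,j)` and
`m(f, dg, ψ)(i,j) = ⅛(f(j)−f(i))(g(j)−g(i))ψ(i,j)`. -/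
theorem first_nontrivial_Ainfty_dim_one {V : Type*}
    (f g : V → ℝ) (ψ : V → V → ℝ) (i j : V) :
    w01 (w00 f g) ψ i j - w01 f (w01 g ψ) i j =
      m3 g (d0 f) ψ i j + m3 f (d0 g) ψ i j ∧
    m3 g (d0 f) ψ i j = (1 / 8) * (g j - g i) * (f j - f i) * ψ i j ∧
    m3 f (d0 g) ψ i j = (1 / 8) * (f j - f i) * (g j - g i) * ψ i j := by
  refine ⟨?_, rfl, rfl⟩
  rw [w01_w00_sub_w01_w01, m3_d0_apply, m3_d0_apply]
  ring
end

section
/- Consistency of the A∞ recursion: let R be a (not necessarily commutative) ring, d ∈ R, m : ℕ → R, and p ≥ 3. Suppose that for every k with 2 ≤ k ≤ p − 1 one has d·m(k) + m(k)·d = − Σ_{q=2}^{k−1} m(q)·m(k+1−q) (for k = 2 the right-hand side is the empty sum, i.e. 0). Then the element M := − Σ_{k=2}^{p−1} m(k)·m(p+1−k) commutes with d: d·M = M·d. -/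
/-!
Put `f = ∑_{k ≥ 2} m k X^(k-1)` and `D = C d` in `R⟦X⟧`. The hypotheses say that the
series `E = D f + f D + f²` vanishes below degree `p - 1`, and the sum in the conclusion is
the coefficient of `X^(p-1)` in `f²`. In any ring `⁅D, f²⁆ = ⁅E, f⁆`, and since `f` has no
constant term, both `E f` and `f E` vanish in degree `p - 1`.
-/

open PowerSeries

theorem Ring.lie_mul_self_eq {A : Type*} [Ring A] (a b : A) :
    ⁅a, b * b⁆ = ⁅a * b + b * a + b * b, b⁆ := by
  simp only [Ring.lie_def]
  noncomm_ring

namespace PowerSeries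

theorem coeff_mul_eq_zero_of_lt_order_add {R : Type*} [Semiring R] {φ ψ : R⟦X⟧} {n : ℕ}
    (h : n < φ.order + ψ.order) : coeff n (φ * ψ) = 0 :=
  coeff_of_lt_order n (h.trans_le (le_order_mul φ ψ))

theorem commute_coeff_mul_self_of_le_order {R : Type*} [Ring R] (d : R) {f : R⟦X⟧}
    (hf : constantCoeff f = 0) {n : ℕ} (hn : n ≤ (C d * f + f * C d + f * f).order) :
    Commute d (coeff n (f * f)) := by
  set E := C d * f + f * C d + f * f
  have hlt : (n : ℕ∞) < E.order + f.order :=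
    calc (n : ℕ∞) < n + 1 := by exact_mod_cast n.lt_succ_self
      _ ≤ E.order + f.order := add_le_add hn (one_le_order_iff_constCoeff_eq_zero.mpr hf)
  have hlt' : (n : ℕ∞) < f.order + E.order := add_comm E.order f.order ▸ hlt
  have key := congrArg (coeff n) (Ring.lie_mul_self_eq (C d) f)
  rw [Ring.lie_def, Ring.lie_def, map_sub, map_sub, coeff_C_mul, coeff_mul_C,
    coeff_mul_eq_zero_of_lt_order_add hlt, coeff_mul_eq_zero_of_lt_order_add hlt',
    sub_zero] at key
  exact sub_eq_zero.mp key

end PowerSeries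

section AInfty

variable {R : Type*} [Ring R]

/-- `m k` sits in degree `k - 1` (and `m 0`, `m 1` are dropped), so that the products
`m q * m (k + 1 - q)` of the recursion all land in degree `k - 1`. -/
def ainftySeries (m : ℕ → R) : R⟦X⟧ :=
  mk fun n => if n = 0 then 0 else m (n + 1)

theorem coeff_ainftySeries (m : ℕ → R) (n : ℕ) :
    coeff n (ainftySeries m) = if n = 0 then 0 else m (n + 1) :=
  coeff_mk _ _

theorem constantCoeff_ainftySeries (m : ℕ → R) : constantCoeff (ainftySeries m) = 0 := by
  rw [← coeff_zero_eq_constantCoeff_apply, coeff_ainftySeries, if_pos rfl]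

theorem coeff_pred_ainftySeries_mul_self (m : ℕ → R) (k : ℕ) :
    coeff (k - 1) (ainftySeries m * ainftySeries m) =
      ∑ q ∈ Finset.Icc 2 (k - 1), m q * m (k + 1 - q) := by
  rw [coeff_mul, Finset.Nat.sum_antidiagonal_eq_sum_range_succ_mk]
  symm
  apply Finset.sum_bij_ne_zero (fun q _ _ => q - 1)
  · intro q hq _
    simp only [Finset.mem_Icc] at hq
    simp only [Finset.mem_range]
    omega
  · intro a ha _ b hb _ h
    simp only [Finset.mem_Icc] at ha hb
    omega
  · intro i hi h
    simp only [coeff_ainftySeries] at h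
    split_ifs at h with hi0 hki <;> simp only [zero_mul, mul_zero, ne_eq, not_true] at h
    simp only [Finset.mem_range] at hi
    refine ⟨i + 1, by simp only [Finset.mem_Icc]; omega, ?_, by simp⟩
    convert h using 3
    omega
  · intro q hq _
    simp only [Finset.mem_Icc] at hq
    simp only [coeff_ainftySeries]
    rw [if_neg (by omega), if_neg (by omega)]
    congr 2 <;> omega

theorem le_order_ainftySeries_of_recursion (d : R) (m : ℕ → R) (p : ℕ)
    (hrec : ∀ k, 2 ≤ k → k ≤ p - 1 →
      d * m k + m k * d = -∑ q ∈ Finset.Icc 2 (k - 1), m q * m (k + 1 - q)) :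
    ((p - 1 : ℕ) : ℕ∞) ≤
      (C d * ainftySeries m + ainftySeries m * C d + ainftySeries m * ainftySeries m).order := by
  refine nat_le_order _ _ fun i hi => ?_
  rw [map_add, map_add, coeff_C_mul, coeff_mul_C]
  rcases i with _ | i
  · simp only [coeff_ainftySeries, if_pos, mul_zero, zero_mul, add_zero,
      coeff_zero_eq_constantCoeff, map_mul, constantCoeff_ainftySeries]
  · have hsq := coeff_pred_ainftySeries_mul_self m (i + 2)
    have hk := hrec (i + 2) (by omega) (by omega)
    simp only [Nat.add_one_sub_one] at hsq hk
    simp only [coeff_ainftySeries, Nat.add_eq_zero_iff, one_ne_zero, and_false, if_false,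
      hsq, hk, neg_add_cancel]

end AInfty

theorem Ainfty_consistency_general {R : Type*} [Ring R] (d : R) (m : ℕ → R)
    (p : ℕ)
    (hrec : ∀ k, 2 ≤ k → k ≤ p - 1 →
      d * m k + m k * d = -∑ q ∈ Finset.Icc 2 (k - 1), m q * m (k + 1 - q)) :
    d * (-∑ k ∈ Finset.Icc 2 (p - 1), m k * m (p + 1 - k)) =
      (-∑ k ∈ Finset.Icc 2 (p - 1), m k * m (p + 1 - k)) * d := by
  rw [← coeff_pred_ainftySeries_mul_self]
  exact (commute_coeff_mul_self_of_le_order d (constantCoeff_ainftySeries m)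
    (le_order_ainftySeries_of_recursion d m p hrec)).neg_right.eq

/-- Consistency of the A∞ recursion: if for every `k` with `2 ≤ k ≤ p − 1` one
has `d·m(k) + m(k)·d = − Σ_{q=2}^{k−1} m(q)·m(k+1−q)`, then the element
`M := − Σ_{k=2}^{p−1} m(k)·m(p+1−k)` commutes with `d`. -/
theorem Ainfty_consistency {R : Type*} [Ring R] (d : R) (m : ℕ → R)
    (p : ℕ) (hp : 3 ≤ p)
    (hrec : ∀ k, 2 ≤ k → k ≤ p - 1 →
      d * m k + m k * d = -∑ q ∈ Finset.Icc 2 (k - 1), m q * m (k + 1 - q)) :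
    d * (-∑ k ∈ Finset.Icc 2 (p - 1), m k * m (p + 1 - k)) =
      (-∑ k ∈ Finset.Icc 2 (p - 1), m k * m (p + 1 - k)) * d :=
  Ainfty_consistency_general d m p hrec
end

section
/- The recursive right-hand K-operator construction solves all A∞ relations: let R be a (not necessarily commutative) ring and d, w, K ∈ R with d² = 0, d·w + w·d = 0 and d·K + K·d = 1. Define m : ℕ → R by m(1) = d, m(2) = w, and recursively m(p) = (− Σ_{k=2}^{p−1} m(k)·m(p+1−k))·K for p ≥ 3. Then for every n ≥ 1 the n-th A∞ relation holds: Σ_{k=1}^{n} m(k)·m(n+1−k) = 0. -/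
/-!
Write `S n = ∑_{k=2}^{n-1} m k * m (n+1-k)` (`quadSum m n`), so that the `n`-th relation reads
`d * m n + m n * d + S n = 0`. Assume the relations below `n`. Expanding `d * S n` and
`S n * d` with them, the terms `m k * d * m j` cancel and what is left is
`∑ S k * m (n+1-k) - ∑ m k * S (n+1-k)`, which vanishes because both sums enumerate the
triple products `m a * m b * m c` with `a + b + c = n + 2`. Hence `d` commutes with `S n`,
and then `m n = -S n * K` satisfies `d * m n + m n * d = -S n * (d * K + K * d) = -S n`.
-/

open Finset

namespace AInfty

variable {R : Type*}

def quadSum [NonUnitalNonAssocSemiring R] (m : ℕ → R) (n : ℕ) : R :=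
  ∑ k ∈ Icc 2 (n - 1), m k * m (n + 1 - k)

theorem sum_Icc_one_eq_add_quadSum [NonUnitalNonAssocSemiring R] (m : ℕ → R) {n : ℕ}
    (hn : 2 ≤ n) :
    ∑ k ∈ Icc 1 n, m k * m (n + 1 - k) = m 1 * m n + m n * m 1 + quadSum m n := by
  have hIcc : Icc 1 n = insert 1 (insert n (Icc 2 (n - 1))) := by
    ext x; simp only [mem_Icc, mem_insert]; omega
  rw [hIcc, sum_insert (by simp only [mem_insert, mem_Icc]; omega),
    sum_insert (by simp only [mem_Icc]; omega), Nat.add_sub_cancel,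
    show n + 1 - n = 1 by omega, quadSum]
  abel

theorem sum_quadSum_mul_eq_sum_mul_quadSum [NonUnitalSemiring R] (m : ℕ → R) (n : ℕ) :
    ∑ k ∈ Icc 2 (n - 1), quadSum m k * m (n + 1 - k) =
      ∑ k ∈ Icc 2 (n - 1), m k * quadSum m (n + 1 - k) := by
  simp only [quadSum, sum_mul, mul_sum]
  rw [sum_sigma', sum_sigma']
  refine sum_nbij' (fun x => ⟨x.2, x.1 + 1 - x.2⟩) (fun x => ⟨x.1 + x.2 - 1, x.1⟩)
    ?_ ?_ ?_ ?_ ?_ <;> simp only [mem_sigma, mem_Icc, Sigma.forall]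
  · intro a b h; omega
  · intro a b h; omega
  · intro a b h; rw [show b + (a + 1 - b) - 1 = a by omega]
  · intro a b h; rw [show a + b - 1 + 1 - a = b by omega]
  · intro a b h
    rw [show n + 1 - b + 1 - (a + 1 - b) = n + 1 - a by omega, mul_assoc]

theorem commute_quadSum [Ring R] (m : ℕ → R) (n : ℕ)
    (hrel : ∀ p, 2 ≤ p → p < n → m 1 * m p + m p * m 1 + quadSum m p = 0) :
    Commute (m 1) (quadSum m n) := by
  have hleft : ∀ k ∈ Icc 2 (n - 1), m 1 * (m k * m (n + 1 - k)) =
      -(m k * m 1 * m (n + 1 - k)) - quadSum m k * m (n + 1 - k) := by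
    intro k hk
    rw [mem_Icc] at hk
    have hk' := hrel k hk.1 (by omega)
    rw [← mul_assoc, show m 1 * m k = -(m k * m 1) - quadSum m k
      by rw [← sub_eq_zero, ← hk']; abel]
    noncomm_ring
  have hright : ∀ k ∈ Icc 2 (n - 1), m k * m (n + 1 - k) * m 1 =
      -(m k * m 1 * m (n + 1 - k)) - m k * quadSum m (n + 1 - k) := by
    intro k hk
    rw [mem_Icc] at hk
    have hj := hrel (n + 1 - k) (by omega) (by omega)
    rw [mul_assoc, show m (n + 1 - k) * m 1 = -(m 1 * m (n + 1 - k)) - quadSum m (n + 1 - k)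
      by rw [← sub_eq_zero, ← hj]; abel]
    noncomm_ring
  change m 1 * quadSum m n = quadSum m n * m 1
  rw [quadSum, mul_sum, sum_mul, sum_congr rfl hleft, sum_congr rfl hright,
    sum_sub_distrib, sum_sub_distrib, sum_quadSum_mul_eq_sum_mul_quadSum]

theorem mul_neg_mul_add_neg_mul_mul [Ring R] {d S K : R} (hS : Commute d S)
    (hK : d * K + K * d = 1) : d * (-S * K) + -S * K * d = -S := by
  calc d * (-S * K) + -S * K * d = -(d * S * K) - S * (K * d) := by noncomm_ring
    _ = -(S * (d * K + K * d)) := by rw [hS.eq]; noncomm_ring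
    _ = -S := by rw [hK, mul_one]

end AInfty

open AInfty in
/-- The recursive right-hand K-operator construction solves all A∞ relations:
let `d² = 0`, `d·w + w·d = 0`, `d·K + K·d = 1`, and define `m(1) = d`,
`m(2) = w`, `m(p) = (−Σ_{k=2}^{p−1} m(k)·m(p+1−k))·K` for `p ≥ 3`.  Then for
every `n ≥ 1`, `Σ_{k=1}^{n} m(k)·m(n+1−k) = 0`. -/
theorem right_K_recursion_solves_Ainfty {R : Type*} [Ring R] (d w K : R)
    (hd : d * d = 0) (hw : d * w + w * d = 0) (hK : d * K + K * d = 1)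
    (m : ℕ → R) (hm1 : m 1 = d) (hm2 : m 2 = w)
    (hrec : ∀ p, 3 ≤ p →
      m p = (-∑ k ∈ Finset.Icc 2 (p - 1), m k * m (p + 1 - k)) * K) :
    ∀ n, 1 ≤ n → ∑ k ∈ Finset.Icc 1 n, m k * m (n + 1 - k) = 0 := by
  have hrel : ∀ n, 2 ≤ n → m 1 * m n + m n * m 1 + quadSum m n = 0 := by
    intro n
    induction n using Nat.strong_induction_on with
    | _ n ih =>
      intro hn
      rcases (show n = 2 ∨ 3 ≤ n by omega) with rfl | hn3
      · simpa [quadSum, hm1, hm2] using hw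
      · have hcomm := commute_quadSum m n fun p hp hpn => ih p hpn hp
        rw [hm1] at hcomm ⊢
        rw [hrec n hn3, ← quadSum, mul_neg_mul_add_neg_mul_mul hcomm hK, neg_add_cancel]
  intro n hn
  rcases hn.eq_or_lt with rfl | hn2
  · simp [hm1, hd]
  · rw [sum_Icc_one_eq_add_quadSum m hn2]
    exact hrel n hn2
end

section
/- Closed-form A∞ structure from a nilpotent K-operator: let R be a (not necessarily commutative) ring and d, w, K ∈ R with d² = 0, d·w + w·d = 0, d·K + K·d = 1 and K² = 0. Define m(1) = d and m(p) = (−1)^p · w·(w·K)^{p−2} for p ≥ 2. Then for every n ≥ 1, Σ_{k=1}^{n} m(k)·m(n+1−k) = 0. -/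
/-- Closed-form A∞ structure from a nilpotent K-operator: let `d² = 0`,
`d·w + w·d = 0`, `d·K + K·d = 1` and `K² = 0`.  Define `m(1) = d` and
`m(p) = (−1)^p · w·(w·K)^{p−2}` for `p ≥ 2`.  Then for every `n ≥ 1`,
`Σ_{k=1}^{n} m(k)·m(n+1−k) = 0`. -/
theorem closed_form_Ainfty {R : Type*} [Ring R] (d w K : R)
    (hd : d * d = 0) (hw : d * w + w * d = 0) (hK : d * K + K * d = 1)
    (hK2 : K * K = 0)
    (m : ℕ → R) (hm1 : m 1 = d)
    (hm : ∀ p, 2 ≤ p → m p = (-1 : R) ^ p * (w * (w * K) ^ (p - 2))) :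
    ∀ n, 1 ≤ n → ∑ k ∈ Finset.Icc 1 n, m k * m (n + 1 - k) = 0 := by
  have hdw : d * w = -(w * d) := eq_neg_of_add_eq_zero_left hw
  have hdK : d * K = 1 - K * d := eq_sub_of_add_eq hK
  -- key commutation lemma
  have key : ∀ j, d * (w * K) ^ j
      = (w * K) ^ j * d - ∑ i ∈ Finset.range j, (w * K) ^ i * (w * (w * K) ^ (j - 1 - i)) := by
    intro j
    induction j with
    | zero => simp
    | succ j ih =>
      have h1 : d * (w * K) = (w * K) * d - w := by
        calc d * (w * K) = (d * w) * K := by rw [mul_assoc]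
        _ = -(w * (d * K)) := by rw [hdw]; noncomm_ring
        _ = (w * K) * d - w := by rw [hdK]; noncomm_ring
      have h2 : ∀ i ∈ Finset.range j,
          (w * K) ^ i * (w * (w * K) ^ (j - 1 - i)) * (w * K)
          = (w * K) ^ i * (w * (w * K) ^ (j + 1 - 1 - i)) := by
        intro i hi
        simp only [Finset.mem_range] at hi
        have he : j + 1 - 1 - i = (j - 1 - i) + 1 := by omega
        rw [he, pow_succ]; noncomm_ring
      rw [pow_succ, ← mul_assoc, ih, Finset.sum_range_succ, sub_mul, Finset.sum_mul,
        mul_assoc, h1, Finset.sum_congr rfl h2]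
      have he : j + 1 - 1 - j = 0 := by omega
      rw [he]
      noncomm_ring
  have key2 : ∀ j, d * (w * (w * K) ^ j) + (w * (w * K) ^ j) * d
      = ∑ i ∈ Finset.range j, w * ((w * K) ^ i * (w * (w * K) ^ (j - 1 - i))) := by
    intro j
    have : d * (w * (w * K) ^ j) = -(w * (d * (w * K) ^ j)) := by
      rw [← mul_assoc, hdw]; noncomm_ring
    rw [this, key j, mul_sub, Finset.mul_sum, neg_sub, ← mul_assoc]
    exact sub_add_cancel _ _
  -- sign-commuting helper
  have hcomm : ∀ (a : R) (e : ℕ), a * (-1 : R) ^ e = (-1 : R) ^ e * a := fun a e =>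
    ((Commute.neg_one_right a).pow_right e).eq
  intro n hn
  match n, hn with
  | 1, _ => simp [hm1, hd]
  | (j+2), _ =>
    rw [← Finset.Ico_add_one_right_eq_Icc, Finset.sum_Ico_eq_sum_range]
    have hr : j + 2 + 1 - 1 = (j + 1) + 1 := by omega
    rw [hr, Finset.sum_range_succ, Finset.sum_range_succ']
    have hterm : ∀ i ∈ Finset.range j,
        m (1 + (i + 1)) * m (j + 2 + 1 - (1 + (i + 1)))
        = (-1 : R) ^ (j + 3) * (w * ((w * K) ^ i * (w * (w * K) ^ (j - 1 - i)))) := by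
      intro i hi
      simp only [Finset.mem_range] at hi
      have e1 : 1 + (i + 1) = i + 2 := by omega
      have e2 : j + 2 + 1 - (1 + (i + 1)) = j + 1 - i := by omega
      rw [e2, e1, hm (i + 2) (by omega), hm (j + 1 - i) (by omega)]
      have e3 : i + 2 - 2 = i := by omega
      have e4 : j + 1 - i - 2 = j - 1 - i := by omega
      rw [e3, e4]
      rw [mul_assoc, ← mul_assoc (w * (w * K) ^ i), hcomm, mul_assoc, ← mul_assoc,
        ← pow_add]
      have e5 : i + 2 + (j + 1 - i) = j + 3 := by omega
      rw [e5, mul_assoc w]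
    rw [Finset.sum_congr rfl hterm, ← Finset.mul_sum]
    have ha : (1 : ℕ) + 0 = 1 := rfl
    have hb : j + 2 + 1 - (1 + 0) = j + 2 := by omega
    have hc : 1 + (j + 1) = j + 2 := by omega
    have hd2 : j + 2 + 1 - (j + 2) = 1 := by omega
    rw [hc, hd2, ha, hb, hm1, hm (j + 2) (by omega)]
    have e6 : j + 2 - 2 = j := by omega
    rw [e6]
    rw [← mul_assoc d, hcomm d, ← key2 j]
    have e7 : ((-1 : R)) ^ (j + 3) = (-1 : R) ^ (j + 2) * (-1) := by rw [pow_succ]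
    rw [e7]
    noncomm_ring
end

section
/- The closed form satisfies the right-hand recursion: let R be a (not necessarily commutative) ring and w, K ∈ R with K² = 0. Define m(2) = w and m(p) = (−1)^p · w·(w·K)^{p−2} for p ≥ 2. Then for every p ≥ 3, m(p) = (− Σ_{k=2}^{p−1} m(k)·m(p+1−k))·K. -/
/-!
Since `K * K = 0`, every `(w * K) ^ n` with `n ≥ 1` is killed by `K` on the right, so
`m q * K = 0` for all `q ≥ 3`. In the sum only the term `k = p - 1` survives, namely
`m (p - 1) * w * K`, and multiplying the closed form of `m (p - 1)` by `w * K` raises the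
power of `w * K` by one while the minus sign flips the parity.
-/

theorem pow_succ_mul_eq_zero_of_mul_self_eq_zero {M : Type*} [MonoidWithZero M] (w : M) {K : M}
    (hK2 : K * K = 0) (n : ℕ) : (w * K) ^ (n + 1) * K = 0 := by
  rw [pow_succ, mul_assoc, mul_assoc, hK2, mul_zero, mul_zero]

section ClosedForm

variable {R : Type*} [Ring R] {w K : R} {m : ℕ → R}
  (hm : ∀ p, 2 ≤ p → m p = (-1 : R) ^ p * (w * (w * K) ^ (p - 2)))
include hm

theorem closedForm_two : m 2 = w := by
  simpa using hm 2 le_rfl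

theorem closedForm_mul_eq_zero (hK2 : K * K = 0) {q : ℕ} (hq : 3 ≤ q) : m q * K = 0 := by
  obtain ⟨n, rfl⟩ : ∃ n, q = n + 3 := ⟨q - 3, by omega⟩
  rw [hm _ (by omega), show n + 3 - 2 = n + 1 by omega, mul_assoc, mul_assoc,
    pow_succ_mul_eq_zero_of_mul_self_eq_zero w hK2, mul_zero, mul_zero]

theorem closedForm_mul_mul_eq_neg {p : ℕ} (hp : 3 ≤ p) : m (p - 1) * w * K = -m p := by
  obtain ⟨n, rfl⟩ : ∃ n, p = n + 3 := ⟨p - 3, by omega⟩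
  rw [hm _ (by omega), hm _ (by omega), show n + 3 - 1 - 2 = n by omega,
    show n + 3 - 2 = n + 1 by omega, show n + 3 - 1 = n + 2 by omega]
  simp only [pow_succ, mul_assoc, mul_neg, mul_one, neg_mul, neg_neg]

theorem sum_closedForm_mul_eq (hK2 : K * K = 0) {p : ℕ} (hp : 3 ≤ p) :
    (∑ k ∈ Finset.Icc 2 (p - 1), m k * m (p + 1 - k)) * K = m (p - 1) * w * K := by
  rw [Finset.sum_mul, Finset.sum_eq_single_of_mem (p - 1) (by simp only [Finset.mem_Icc]; omega),
    show p + 1 - (p - 1) = 2 by omega, closedForm_two hm]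
  intro k hk hkp
  rw [Finset.mem_Icc] at hk
  rw [mul_assoc, closedForm_mul_eq_zero hm hK2 (by omega), mul_zero]

end ClosedForm

/-- The closed form satisfies the right-hand recursion: let `K² = 0` and
define `m(p) = (−1)^p · w·(w·K)^{p−2}` for `p ≥ 2` (so `m(2) = w`).  Then for
every `p ≥ 3`, `m(p) = (−Σ_{k=2}^{p−1} m(k)·m(p+1−k))·K`. -/
theorem closed_form_satisfies_recursion {R : Type*} [Ring R] (w K : R)
    (hK2 : K * K = 0)
    (m : ℕ → R)
    (hm : ∀ p, 2 ≤ p → m p = (-1 : R) ^ p * (w * (w * K) ^ (p - 2))) :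
    m 2 = w ∧
    ∀ p, 3 ≤ p →
      m p = (-∑ k ∈ Finset.Icc 2 (p - 1), m k * m (p + 1 - k)) * K := by
  refine ⟨closedForm_two hm, fun p hp => ?_⟩
  rw [neg_mul, sum_closedForm_mul_eq hm hK2 hp, closedForm_mul_mul_eq_neg hm hp, neg_neg]
end

section
/- The A∞ operator is a conjugation of the bare differential: let R be a (not necessarily commutative) ring and d, w, K ∈ R with d·w + w·d = 0 and d·K + K·d = 1, and suppose u := 1 + w·K is a unit of R. Then d + w·u⁻¹ = u·d·u⁻¹; if moreover d² = 0 then the element D := d + w·u⁻¹ satisfies D² = 0. -/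
/-!
Since `w` anticommutes with `d` and `K` is a contracting homotopy for `d`, the commutator of
`u = 1 + w K` with `d` is `w K d - d w K = w (K d + d K) = w`. Thus `u d = d u + w`, and
multiplying on the right by `u⁻¹` gives `u d u⁻¹ = d + w u⁻¹`. A conjugate of a square-zero
element is square-zero.
-/

theorem one_add_mul_mul_eq_mul_one_add_mul_add {R : Type*} [Ring R] {d w K : R}
    (hw : d * w + w * d = 0) (hK : d * K + K * d = 1) :
    (1 + w * K) * d = d * (1 + w * K) + w := by
  have hwd : w * d = -(d * w) := eq_neg_of_add_eq_zero_right hw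
  calc (1 + w * K) * d = d + w * (d * K + K * d) - w * d * K := by noncomm_ring
    _ = d * (1 + w * K) + w := by rw [hK, hwd]; noncomm_ring

theorem mul_mul_inverse_eq_add_mul_inverse {R : Type*} [Semiring R] {u d w : R}
    (hu : IsUnit u) (h : u * d = d * u + w) :
    u * d * Ring.inverse u = d + w * Ring.inverse u := by
  rw [h, add_mul, mul_assoc, Ring.mul_inverse_cancel u hu, mul_one]

theorem conj_mul_self_eq_zero {M₀ : Type*} [MonoidWithZero M₀] {u x : M₀}
    (hu : IsUnit u) (hx : x * x = 0) :
    u * x * Ring.inverse u * (u * x * Ring.inverse u) = 0 := by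
  obtain ⟨u, rfl⟩ := hu
  rw [Ring.inverse_unit, ← sq, Units.conj_pow, sq, hx, mul_zero, zero_mul]

/-- The A∞ operator is a conjugation of the bare differential: let
`d·w + w·d = 0`, `d·K + K·d = 1`, and suppose `u := 1 + w·K` is a unit.  Then
`d + w·u⁻¹ = u·d·u⁻¹`; if moreover `d² = 0` then `D := d + w·u⁻¹` satisfies
`D² = 0`. -/
theorem Ainfty_operator_is_conjugation {R : Type*} [Ring R] (d w K : R)
    (hw : d * w + w * d = 0) (hK : d * K + K * d = 1)
    (hu : IsUnit (1 + w * K)) :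
    d + w * Ring.inverse (1 + w * K) =
      (1 + w * K) * d * Ring.inverse (1 + w * K) ∧
    (d * d = 0 →
      (d + w * Ring.inverse (1 + w * K)) * (d + w * Ring.inverse (1 + w * K)) = 0) := by
  have hconj := mul_mul_inverse_eq_add_mul_inverse hu
    (one_add_mul_mul_eq_mul_one_add_mul_add hw hK)
  refine ⟨hconj.symm, fun hd => ?_⟩
  rw [← hconj]
  exact conj_mul_self_eq_zero hu hd
end
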